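/- Let α ∈ (0,1]^k with α_1 ≥ ... ≥ α_k, Σ_i α_i > k−1, t the largest index with α_i = 1 (t=0 if none), and v = ⌈1/α_k⌉. The set of nonnegative integer solutions of α·x ≥ 1 is exactly the union of: (1) all x ≥ 0 with at least two nonzero coordinates; (2) z·e_i for 1 ≤ i ≤ t and integer z ≥ 1; (3) z·e_i for t < i < k and integer z ≥ 2; (4) z·e_k for integer z ≥ v. -/

import Mathlib

/-!
Since every `α i ≤ 1` and the total deficit `∑ (1 - α i)` is below `1`, any two weights sum to
more than `1`; hence every `x` with two nonzero coordinates is a solution. For `x = z • e_i` the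
condition reads `⌈1 / α i⌉ ≤ z`, and this ceiling is `1` when `α i = 1`, `v` when `i = k - 1`,
and `2` when `t ≤ i < k - 1`, since then `α i < 1` and `2 α i ≥ α i + α (k - 1) > 1`.
-/

open Finset

lemma one_lt_add_of_card_sub_one_lt_sum {ι : Type*} [Fintype ι] [DecidableEq ι] {α : ι → ℝ}
    (h1 : ∀ i, α i ≤ 1) (hsum : (Fintype.card ι : ℝ) - 1 < ∑ i, α i) {i j : ι} (hij : i ≠ j) :
    1 < α i + α j := by
  have hdeficit : ∑ l, (1 - α l) < 1 := by
    rw [sum_sub_distrib, sum_const, card_univ, nsmul_one]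
    linarith
  have hpair : (1 - α i) + (1 - α j) ≤ ∑ l, (1 - α l) := by
    rw [← sum_pair (f := fun l => 1 - α l) hij]
    exact sum_le_sum_of_subset_of_nonneg (subset_univ _) fun l _ _ => sub_nonneg.2 (h1 l)
  linarith

lemma one_lt_sum_mul_of_two_le_card_support {ι : Type*} [Fintype ι] {α : ι → ℝ}
    (h0 : ∀ i, 0 ≤ α i) (hpair : ∀ i j, i ≠ j → 1 < α i + α j) {x : ι → ℕ}
    (hx : 2 ≤ #{i | 0 < x i}) : 1 < ∑ i, α i * x i := by
  classical
  obtain ⟨a, ha, b, hb, hab⟩ := one_lt_card.1 hx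
  simp only [mem_filter, mem_univ, true_and] at ha hb
  have hle : α a * x a + α b * x b ≤ ∑ i, α i * x i := by
    rw [← sum_pair (f := fun i => α i * (x i : ℝ)) hab]
    exact sum_le_sum_of_subset_of_nonneg (subset_univ _) fun i _ _ =>
      mul_nonneg (h0 i) (Nat.cast_nonneg _)
  have ha' : α a ≤ α a * x a := le_mul_of_one_le_right (h0 a) (by exact_mod_cast ha)
  have hb' : α b ≤ α b * x b := le_mul_of_one_le_right (h0 b) (by exact_mod_cast hb)
  linarith [hpair a b hab]

lemma exists_forall_ne_eq_zero_of_card_support_le_one {ι : Type*} [Fintype ι] [Nonempty ι]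
    {x : ι → ℕ} (hx : #{i | 0 < x i} ≤ 1) : ∃ i, ∀ j, j ≠ i → x j = 0 := by
  classical
  obtain ⟨i, hi⟩ := card_le_one_iff_subset_singleton.1 hx
  refine ⟨i, fun j hj => Nat.eq_zero_of_not_pos fun hpos => hj ?_⟩
  simpa using hi (mem_filter.2 ⟨mem_univ j, hpos⟩)

lemma one_le_mul_natCast_iff_ceil_le {a : ℝ} (ha : 0 < a) (z : ℕ) :
    1 ≤ a * z ↔ ⌈1 / a⌉ ≤ (z : ℤ) := by
  rw [Int.ceil_le, Int.cast_natCast, div_le_iff₀ ha, mul_comm]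

lemma ceil_one_div_eq_two {a : ℝ} (ha : 1 / 2 < a) (ha1 : a < 1) : ⌈1 / a⌉ = 2 := by
  have ha0 : 0 < a := by linarith
  rw [Int.ceil_eq_iff]
  constructor
  · rw [lt_div_iff₀ ha0]; norm_num; linarith
  · rw [div_le_iff₀ ha0]; norm_num; linarith

theorem stmt_5 (k : ℕ) (hk : 2 ≤ k) (α : Fin k → ℝ)
    (h0 : ∀ i, 0 < α i) (h1 : ∀ i, α i ≤ 1)
    (hmono : ∀ i j : Fin k, i ≤ j → α j ≤ α i)
    (hsuml : (k : ℝ) - 1 < ∑ i, α i)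
    (t : ℕ) (ht : ∀ i : Fin k, α i = 1 ↔ (i : ℕ) < t)
    (v : ℕ) (hv : (v : ℤ) = ⌈1 / α ⟨k - 1, by omega⟩⌉) :
    ∀ x : Fin k → ℕ, (1 ≤ ∑ i, α i * (x i : ℝ)) ↔
      (2 ≤ (Finset.univ.filter (fun i => 0 < x i)).card
        ∨ ∃ (i : Fin k) (z : ℕ), x = (fun j => if j = i then z else 0) ∧
            (((i : ℕ) < t ∧ 1 ≤ z)
             ∨ (t ≤ (i : ℕ) ∧ (i : ℕ) < k - 1 ∧ 2 ≤ z)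
             ∨ ((i : ℕ) = k - 1 ∧ v ≤ z))) := by
  have hpair : ∀ i j : Fin k, i ≠ j → 1 < α i + α j := fun i j =>
    one_lt_add_of_card_sub_one_lt_sum h1 (by simpa using hsuml)
  have hsingle : ∀ (i : Fin k) (z : ℕ), 1 ≤ α i * (z : ℝ) ↔ ((i : ℕ) < t ∧ 1 ≤ z)
      ∨ (t ≤ (i : ℕ) ∧ (i : ℕ) < k - 1 ∧ 2 ≤ z) ∨ ((i : ℕ) = k - 1 ∧ v ≤ z) := by
    intro i z
    rw [one_le_mul_natCast_iff_ceil_le (h0 i)]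
    have htop : (i : ℕ) < t → ⌈1 / α i⌉ = 1 := fun hi => by simp [(ht i).2 hi]
    have hlast : (i : ℕ) = k - 1 → ⌈1 / α i⌉ = v := fun hi => by
      rw [hv]; congr 3; exact Fin.ext hi
    have hmid : t ≤ (i : ℕ) → (i : ℕ) < k - 1 → ⌈1 / α i⌉ = 2 := fun hti hik => by
      have hlt : i < ⟨k - 1, by omega⟩ := Fin.lt_def.2 hik
      refine ceil_one_div_eq_two ?_ ((h1 i).lt_of_ne fun h => absurd ((ht i).1 h) (by omega))
      linarith [hpair i _ hlt.ne, hmono i _ hlt.le]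
    omega
  intro x
  constructor
  · intro hx
    refine (le_or_gt 2 #{i | 0 < x i}).imp id fun hcard => ?_
    have : Nonempty (Fin k) := ⟨⟨0, by omega⟩⟩
    obtain ⟨i, hi⟩ :=
      exists_forall_ne_eq_zero_of_card_support_le_one (by omega : #{i | 0 < x i} ≤ 1)
    refine ⟨i, x i, funext fun j => by split_ifs with h <;> simp_all, (hsingle i (x i)).1 ?_⟩
    rwa [Fintype.sum_eq_single i fun j hj => by simp [hi j hj]] at hx
  · rintro (hcard | ⟨i, z, rfl, hz⟩)
    · exact (one_lt_sum_mul_of_two_le_card_support (fun i => (h0 i).le) hpair hcard).le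
    · simpa [Finset.sum_ite_eq'] using (hsingle i z).2 hz
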